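/- PD = ⋂_{n≥0} PD_n; that is, a vector x ∈ ℂ^d satisfies t_s(x x†) = 0 for some schedule s if and only if for every n ≥ 0 there exists a word f of length n with t_f(x x†) = 0. -/

import Mathlib

noncomputable section
open Matrix
open scoped ComplexOrder

variable {d m r : ℕ}

/-- One step of process `i`: `T_i(ρ) = E_i(M₁ ρ M₁†) = ∑_j (E_{i,j} M₁) ρ (E_{i,j} M₁)†`. -/
def Tstep (E : Fin m → Fin r → Matrix (Fin d) (Fin d) ℂ)
    (M1 : Matrix (Fin d) (Fin d) ℂ) (i : Fin m)
    (ρ : Matrix (Fin d) (Fin d) ℂ) : Matrix (Fin d) (Fin d) ℂ :=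
  ∑ j, (E i j * M1) * ρ * (E i j * M1)ᴴ

/-- `T_f` for a word `f = s₁⋯s_n`: apply `T_{s₁}` first, then `T_{s₂}`, …, `T_{s_n}`. -/
def Tword (E : Fin m → Fin r → Matrix (Fin d) (Fin d) ℂ)
    (M1 : Matrix (Fin d) (Fin d) ℂ) (f : List (Fin m))
    (ρ : Matrix (Fin d) (Fin d) ℂ) : Matrix (Fin d) (Fin d) ℂ :=
  f.foldl (fun σ k => Tstep E M1 k σ) ρ

/-- The support of a matrix: its column space, as a subspace of `ℂ^d`. -/
def supp (A : Matrix (Fin d) (Fin d) ℂ) : Submodule ℂ (Fin d → ℂ) :=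
  LinearMap.range (Matrix.toLin' A)

/-- Length-`n` prefix of a schedule. -/
def prefixn (s : ℕ → Fin m) (n : ℕ) : List (Fin m) :=
  List.ofFn (fun i : Fin n => s i)

/-- Termination probability within a word `f`. -/
def tWord (E : Fin m → Fin r → Matrix (Fin d) (Fin d) ℂ)
    (M0 M1 : Matrix (Fin d) (Fin d) ℂ) (f : List (Fin m))
    (ρ : Matrix (Fin d) (Fin d) ℂ) : ℝ :=
  ∑ n ∈ Finset.range (f.length + 1),
    (M0 * Tword E M1 (f.take n) ρ * M0ᴴ).trace.re

/-- Termination probability along a schedule `s`. -/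
def tSched (E : Fin m → Fin r → Matrix (Fin d) (Fin d) ℂ)
    (M0 M1 : Matrix (Fin d) (Fin d) ℂ) (s : ℕ → Fin m)
    (ρ : Matrix (Fin d) (Fin d) ℂ) : ℝ :=
  ∑' n : ℕ, (M0 * Tword E M1 (prefixn s n) ρ * M0ᴴ).trace.re

/-- Termination probability `t(ρ)`: infimum over all schedules. -/
def tInf (E : Fin m → Fin r → Matrix (Fin d) (Fin d) ℂ)
    (M0 M1 : Matrix (Fin d) (Fin d) ℂ)
    (ρ : Matrix (Fin d) (Fin d) ℂ) : ℝ :=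
  ⨅ s : ℕ → Fin m, tSched E M0 M1 s ρ

/-- The reachable space `H_{R(ρ)}`. -/
def HR (E : Fin m → Fin r → Matrix (Fin d) (Fin d) ℂ)
    (M1 : Matrix (Fin d) (Fin d) ℂ)
    (ρ : Matrix (Fin d) (Fin d) ℂ) : Submodule ℂ (Fin d → ℂ) :=
  ⨆ f : List (Fin m), supp (Tword E M1 f ρ)

/-- The average super-operator `T = (1/m) ∑ T_i`. -/
def Tavg (E : Fin m → Fin r → Matrix (Fin d) (Fin d) ℂ)
    (M1 : Matrix (Fin d) (Fin d) ℂ)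
    (ρ : Matrix (Fin d) (Fin d) ℂ) : Matrix (Fin d) (Fin d) ℂ :=
  ((m : ℂ)⁻¹) • ∑ i : Fin m, Tstep E M1 i ρ

/-- `H_{R̄_n(ρ)} = ⋁_{k=0}^n supp(T^k(ρ))`. -/
def HRbar (E : Fin m → Fin r → Matrix (Fin d) (Fin d) ℂ)
    (M1 : Matrix (Fin d) (Fin d) ℂ)
    (ρ : Matrix (Fin d) (Fin d) ℂ) (n : ℕ) : Submodule ℂ (Fin d → ℂ) :=
  ⨆ k : Fin (n + 1), supp ((Tavg E M1)^[k] ρ)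

/-- Reachable termination probability `h(ρ)`. -/
def hProb (E : Fin m → Fin r → Matrix (Fin d) (Fin d) ℂ)
    (M0 M1 : Matrix (Fin d) (Fin d) ℂ)
    (ρ : Matrix (Fin d) (Fin d) ℂ) : ℝ :=
  sInf { x : ℝ | ∃ σ : Matrix (Fin d) (Fin d) ℂ,
    σ.PosSemidef ∧ σ.trace = 1 ∧ supp σ ≤ HR E M1 ρ ∧ x = tInf E M0 M1 σ }

/-- `PD_f`: pure states diverging within the word `f`. -/
def PDword (E : Fin m → Fin r → Matrix (Fin d) (Fin d) ℂ)
    (M0 M1 : Matrix (Fin d) (Fin d) ℂ) (f : List (Fin m)) : Set (Fin d → ℂ) :=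
  { x : Fin d → ℂ | tWord E M0 M1 f (Matrix.vecMulVec x (star x)) = 0 }

/-- `PD_n`: union of `PD_f` over words of length `n`. -/
def PDn (E : Fin m → Fin r → Matrix (Fin d) (Fin d) ℂ)
    (M0 M1 : Matrix (Fin d) (Fin d) ℂ) (n : ℕ) : Set (Fin d → ℂ) :=
  { x : Fin d → ℂ | ∃ f : List (Fin m), f.length = n ∧ x ∈ PDword E M0 M1 f }

/-- `PD`: the diverging pure states. -/
def PD (E : Fin m → Fin r → Matrix (Fin d) (Fin d) ℂ)
    (M0 M1 : Matrix (Fin d) (Fin d) ℂ) : Set (Fin d → ℂ) :=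
  { x : Fin d → ℂ | ∃ s : ℕ → Fin m, tSched E M0 M1 s (Matrix.vecMulVec x (star x)) = 0 }

/-!
Along a schedule `s` the series `t_s(ρ)` has nonnegative terms `tr(M₀ T_{s(≤n)}(ρ) M₀†)`, and it
is summable because each step loses exactly this much trace:
`tr T_i(σ) = tr σ - tr(M₀ σ M₀†)`. Hence `t_s(ρ) = 0` iff every term vanishes, iff
`t_{s(≤n)}(ρ) = 0` for all `n`. Conversely, vanishing of `t_f(ρ)` passes to prefixes of `f`,
so by Kőnig's lemma words of every length with `t_f(ρ) = 0` are prefixes of a single schedule.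
-/

theorem Matrix.PosSemidef.re_trace_nonneg {n : Type*} [Fintype n] {A : Matrix n n ℂ}
    (hA : A.PosSemidef) : 0 ≤ A.trace.re :=
  (Complex.nonneg_iff.1 hA.trace_nonneg).1

theorem exists_seq_forall_ofFn_of_forall_exists_length {α : Type*} [Finite α]
    (P : List α → Prop) (hP : ∀ f a, P (f ++ [a]) → P f)
    (h : ∀ n, ∃ f : List α, f.length = n ∧ P f) :
    ∃ s : ℕ → α, ∀ n, P (List.ofFn fun i : Fin n => s i) := by
  -- Kőnig's lemma by compactness of `ℕ → α`: the schedules whose length-`n` prefix satisfies `P`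
  -- form a decreasing sequence of nonempty closed sets.
  obtain ⟨a₀⟩ : Nonempty α := by
    obtain ⟨f, hf, -⟩ := h 1
    exact ⟨f.head (List.ne_nil_of_length_pos (by omega))⟩
  let _ : TopologicalSpace α := ⊥
  have : DiscreteTopology α := ⟨rfl⟩
  let S : ℕ → Set (ℕ → α) := fun n => {s | P (List.ofFn fun i : Fin n => s i)}
  have hS_closed : ∀ n, IsClosed (S n) := fun n =>
    have hcont : Continuous fun (s : ℕ → α) (i : Fin n) => s i :=
      continuous_pi fun i => continuous_apply _
    (isClosed_discrete {g : Fin n → α | P (List.ofFn g)}).preimage hcont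
  have hS_anti : ∀ n, S (n + 1) ⊆ S n := fun n s hs =>
    hP _ (s n) (by
      simpa only [S, Set.mem_ofPred_eq, List.ofFn_succ', List.concat_eq_append, Fin.val_castSucc,
        Fin.val_last] using hs)
  have hS_nonempty : ∀ n, (S n).Nonempty := by
    intro n
    obtain ⟨f, rfl, hf⟩ := h n
    refine ⟨fun i => f.getD i a₀, ?_⟩
    simpa [S, List.getD_eq_getElem] using hf
  obtain ⟨s, hs⟩ := IsCompact.nonempty_iInter_of_sequence_nonempty_isCompact_isClosed S
    hS_anti hS_nonempty (hS_closed 0).isCompact hS_closed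
  exact ⟨s, Set.mem_iInter.1 hs⟩

theorem prefixn_length (s : ℕ → Fin m) (n : ℕ) : (prefixn s n).length = n := by
  simp [prefixn]

theorem prefixn_succ (s : ℕ → Fin m) (n : ℕ) : prefixn s (n + 1) = prefixn s n ++ [s n] := by
  rw [prefixn, List.ofFn_succ', List.concat_eq_append]
  rfl

theorem take_prefixn (s : ℕ → Fin m) {k n : ℕ} (h : k ≤ n) :
    (prefixn s n).take k = prefixn s k :=
  List.ext_getElem (by simp [prefixn_length, h]) fun i _ _ => by simp [prefixn]

section QuantumProgram

variable (E : Fin m → Fin r → Matrix (Fin d) (Fin d) ℂ)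
  (M0 M1 : Matrix (Fin d) (Fin d) ℂ)

def haltProb (f : List (Fin m)) (ρ : Matrix (Fin d) (Fin d) ℂ) : ℝ :=
  (M0 * Tword E M1 f ρ * M0ᴴ).trace.re

theorem tWord_eq_sum_haltProb (f : List (Fin m)) (ρ : Matrix (Fin d) (Fin d) ℂ) :
    tWord E M0 M1 f ρ = ∑ n ∈ Finset.range (f.length + 1), haltProb E M0 M1 (f.take n) ρ :=
  rfl

theorem tSched_eq_tsum_haltProb (s : ℕ → Fin m) (ρ : Matrix (Fin d) (Fin d) ℂ) :
    tSched E M0 M1 s ρ = ∑' n, haltProb E M0 M1 (prefixn s n) ρ :=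
  rfl

theorem Tstep_posSemidef (i : Fin m) {ρ : Matrix (Fin d) (Fin d) ℂ} (hρ : ρ.PosSemidef) :
    (Tstep E M1 i ρ).PosSemidef :=
  posSemidef_sum _ fun _ _ => hρ.mul_mul_conjTranspose_same _

theorem Tword_append_singleton (f : List (Fin m)) (i : Fin m) (ρ : Matrix (Fin d) (Fin d) ℂ) :
    Tword E M1 (f ++ [i]) ρ = Tstep E M1 i (Tword E M1 f ρ) :=
  List.foldl_concat ..

theorem Tword_posSemidef (f : List (Fin m)) {ρ : Matrix (Fin d) (Fin d) ℂ}
    (hρ : ρ.PosSemidef) : (Tword E M1 f ρ).PosSemidef := by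
  induction f using List.reverseRecOn with
  | nil => exact hρ
  | append_singleton f i ih =>
    rw [Tword_append_singleton]
    exact Tstep_posSemidef E M1 i ih

theorem haltProb_nonneg (f : List (Fin m)) {ρ : Matrix (Fin d) (Fin d) ℂ}
    (hρ : ρ.PosSemidef) : 0 ≤ haltProb E M0 M1 f ρ :=
  ((Tword_posSemidef E M1 f hρ).mul_mul_conjTranspose_same M0).re_trace_nonneg

theorem trace_Tstep (hE : ∀ i, ∑ j, (E i j)ᴴ * E i j = 1) (hM : M0ᴴ * M0 + M1ᴴ * M1 = 1)
    (i : Fin m) (ρ : Matrix (Fin d) (Fin d) ℂ) :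
    (Tstep E M1 i ρ).trace = ρ.trace - (M0 * ρ * M0ᴴ).trace := by
  have hM1 : (M1 * ρ * M1ᴴ).trace = ρ.trace - (M0 * ρ * M0ᴴ).trace := by
    rw [trace_mul_cycle M0, trace_mul_cycle M1, eq_sub_iff_add_eq, ← trace_add,
      ← Matrix.add_mul, add_comm, hM, one_mul]
  calc (Tstep E M1 i ρ).trace
      = ∑ j, ((E i j)ᴴ * E i j * (M1 * ρ * M1ᴴ)).trace := by
        refine (trace_sum _ _).trans (Finset.sum_congr rfl fun j _ => ?_)
        rw [← trace_mul_cycle (E i j) (M1 * ρ * M1ᴴ) (E i j)ᴴ, conjTranspose_mul]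
        simp only [Matrix.mul_assoc]
    _ = (M1 * ρ * M1ᴴ).trace := by rw [← trace_sum, ← Finset.sum_mul, hE, one_mul]
    _ = ρ.trace - (M0 * ρ * M0ᴴ).trace := hM1

theorem haltProb_eq_sub (hE : ∀ i, ∑ j, (E i j)ᴴ * E i j = 1) (hM : M0ᴴ * M0 + M1ᴴ * M1 = 1)
    (f : List (Fin m)) (i : Fin m) (ρ : Matrix (Fin d) (Fin d) ℂ) :
    haltProb E M0 M1 f ρ = (Tword E M1 f ρ).trace.re - (Tword E M1 (f ++ [i]) ρ).trace.re := by
  rw [Tword_append_singleton, trace_Tstep E M0 M1 hE hM, Complex.sub_re, sub_sub_cancel]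
  rfl

theorem summable_haltProb_prefixn (hE : ∀ i, ∑ j, (E i j)ᴴ * E i j = 1)
    (hM : M0ᴴ * M0 + M1ᴴ * M1 = 1) (s : ℕ → Fin m) {ρ : Matrix (Fin d) (Fin d) ℂ}
    (hρ : ρ.PosSemidef) : Summable fun n => haltProb E M0 M1 (prefixn s n) ρ := by
  let b n := (Tword E M1 (prefixn s n) ρ).trace.re
  have hstep : ∀ n, haltProb E M0 M1 (prefixn s n) ρ = b n - b (n + 1) := fun n => by
    simp only [b, prefixn_succ]
    exact haltProb_eq_sub E M0 M1 hE hM _ _ ρ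
  refine summable_of_sum_range_le (c := b 0) (fun n => haltProb_nonneg E M0 M1 _ hρ) fun N => ?_
  rw [Finset.sum_congr rfl fun n _ => hstep n, Finset.sum_range_sub']
  linarith [(Tword_posSemidef E M1 (prefixn s N) hρ).re_trace_nonneg]

theorem tSched_eq_zero_iff (hE : ∀ i, ∑ j, (E i j)ᴴ * E i j = 1)
    (hM : M0ᴴ * M0 + M1ᴴ * M1 = 1) (s : ℕ → Fin m) {ρ : Matrix (Fin d) (Fin d) ℂ}
    (hρ : ρ.PosSemidef) :
    tSched E M0 M1 s ρ = 0 ↔ ∀ n, haltProb E M0 M1 (prefixn s n) ρ = 0 := by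
  rw [tSched_eq_tsum_haltProb, ← (summable_haltProb_prefixn E M0 M1 hE hM s hρ).hasSum_iff,
    hasSum_zero_iff_of_nonneg fun n => haltProb_nonneg E M0 M1 _ hρ, funext_iff]
  rfl

theorem tWord_eq_zero_iff (f : List (Fin m)) {ρ : Matrix (Fin d) (Fin d) ℂ}
    (hρ : ρ.PosSemidef) :
    tWord E M0 M1 f ρ = 0 ↔ ∀ k ≤ f.length, haltProb E M0 M1 (f.take k) ρ = 0 := by
  rw [tWord_eq_sum_haltProb,
    Finset.sum_eq_zero_iff_of_nonneg fun k _ => haltProb_nonneg E M0 M1 _ hρ]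
  simp only [Finset.mem_range, Nat.lt_succ_iff]

theorem tWord_eq_zero_of_append_singleton {f : List (Fin m)} {i : Fin m}
    {ρ : Matrix (Fin d) (Fin d) ℂ} (hρ : ρ.PosSemidef) (h : tWord E M0 M1 (f ++ [i]) ρ = 0) :
    tWord E M0 M1 f ρ = 0 := by
  rw [tWord_eq_zero_iff E M0 M1 _ hρ] at h ⊢
  intro k hk
  simpa only [List.take_append_of_le_length hk] using
    h k (by rw [List.length_append, List.length_singleton]; omega)

theorem tWord_prefixn_eq_zero_iff (s : ℕ → Fin m) (n : ℕ) {ρ : Matrix (Fin d) (Fin d) ℂ}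
    (hρ : ρ.PosSemidef) :
    tWord E M0 M1 (prefixn s n) ρ = 0 ↔ ∀ k ≤ n, haltProb E M0 M1 (prefixn s k) ρ = 0 := by
  rw [tWord_eq_zero_iff E M0 M1 _ hρ, prefixn_length]
  exact forall₂_congr fun k hk => by rw [take_prefixn s hk]

end QuantumProgram

theorem PD_eq_iInter_PDn_general (d m r : ℕ)
    (E : Fin m → Fin r → Matrix (Fin d) (Fin d) ℂ)
    (hE : ∀ i, ∑ j, (E i j)ᴴ * E i j = 1)
    (M0 M1 : Matrix (Fin d) (Fin d) ℂ)
    (hM : M0ᴴ * M0 + M1ᴴ * M1 = 1)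
    (x : Fin d → ℂ) :
    (∃ s : ℕ → Fin m, tSched E M0 M1 s (Matrix.vecMulVec x (star x)) = 0) ↔
      ∀ n : ℕ, ∃ f : List (Fin m), f.length = n ∧
        tWord E M0 M1 f (Matrix.vecMulVec x (star x)) = 0 := by
  have hρ := posSemidef_vecMulVec_self_star x
  constructor
  · rintro ⟨s, hs⟩ n
    refine ⟨prefixn s n, prefixn_length s n, ?_⟩
    exact (tWord_prefixn_eq_zero_iff E M0 M1 s n hρ).2 fun k _ =>
      (tSched_eq_zero_iff E M0 M1 hE hM s hρ).1 hs k
  · intro h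
    obtain ⟨s, hs⟩ := exists_seq_forall_ofFn_of_forall_exists_length _
      (fun _ _ => tWord_eq_zero_of_append_singleton E M0 M1 hρ) h
    refine ⟨s, (tSched_eq_zero_iff E M0 M1 hE hM s hρ).2 fun n => ?_⟩
    exact (tWord_prefixn_eq_zero_iff E M0 M1 s n hρ).1 (hs n) n le_rfl

/-- `PD = ⋂_{n≥0} PD_n`. -/
theorem PD_eq_iInter_PDn (d m r : ℕ) (hd : 0 < d) (hm : 0 < m)
    (E : Fin m → Fin r → Matrix (Fin d) (Fin d) ℂ)
    (hE : ∀ i, ∑ j, (E i j)ᴴ * E i j = 1)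
    (M0 M1 : Matrix (Fin d) (Fin d) ℂ)
    (hM : M0ᴴ * M0 + M1ᴴ * M1 = 1)
    (x : Fin d → ℂ) :
    (∃ s : ℕ → Fin m, tSched E M0 M1 s (Matrix.vecMulVec x (star x)) = 0) ↔
      ∀ n : ℕ, ∃ f : List (Fin m), f.length = n ∧
        tWord E M0 M1 f (Matrix.vecMulVec x (star x)) = 0 :=
  PD_eq_iInter_PDn_general d m r E hE M0 M1 hM x
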